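/- arXiv:1707.08904 — 2 statements merged into one kernel-verified Lean document; each statement's English description precedes it below -/
import Mathlib

section
/- For $x > 1$, the digamma function satisfies $\psi(x) = \ln(x - \tfrac12) + O(1/x^2)$; precisely, there exists a constant $C > 0$ such that $|\psi(x) - \ln(x - \tfrac12)| \le C/x^2$ for all $x > 1$. -/
/-- The digamma function `ψ = Γ'/Γ`, as the derivative of `log ∘ Γ` on `(0,∞)`. -/
noncomputable def digamma (x : ℝ) : ℝ := deriv (fun y => Real.log (Real.Gamma y)) x

/-!
Write `g x = ψ x - log (x - 1/2)`. The functional equation `ψ (x + 1) = ψ x + 1/x` gives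
`g x - g (x + 1) = log ((x + 1/2) / (x - 1/2)) - 1/x`, and the series
`log ((1 + u) / (1 - u)) = 2 (u + u³/3 + u⁵/5 + ⋯)` at `u = 1/(2x)` places this between `0` and
`φ x - φ (x + 1)`, where `φ t = 1 / (6 (2t - 1)²)`. So `n ↦ g (x + n)` decreases and
`n ↦ g (x + n) - φ (x + n)` increases, while `g (x + n) → 0` because convexity of `log ∘ Γ`
squeezes `ψ y` between `log (y - 1)` and `log y`.
Hence `0 ≤ g x ≤ φ x ≤ 1 / (6 x²)` for `x > 1`.
-/

open Real Filter Topology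

lemma hasDerivAt_digamma {x : ℝ} (hx : 0 < x) :
    HasDerivAt (fun y => log (Gamma y)) (digamma x) x :=
  ((differentiableAt_Gamma fun m => ((neg_nonpos.mpr m.cast_nonneg).trans_lt hx).ne').log
    (Gamma_pos_of_pos hx).ne').hasDerivAt

lemma log_Gamma_add_one {x : ℝ} (hx : 0 < x) :
    log (Gamma (x + 1)) = log x + log (Gamma x) := by
  rw [Gamma_add_one hx.ne', log_mul hx.ne' (Gamma_pos_of_pos hx).ne']

lemma digamma_add_one {x : ℝ} (hx : 0 < x) : digamma (x + 1) = digamma x + x⁻¹ := by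
  have hshift : HasDerivAt (fun y => log (Gamma (y + 1))) (digamma (x + 1)) x := by
    simpa using (hasDerivAt_digamma (by linarith : 0 < x + 1)).comp_add_const x 1
  have hsum : HasDerivAt (fun y => log y + log (Gamma y)) (x⁻¹ + digamma x) x :=
    (hasDerivAt_log hx.ne').add (hasDerivAt_digamma hx)
  have heq : (fun y => log y + log (Gamma y)) =ᶠ[𝓝 x] fun y => log (Gamma (y + 1)) := by
    filter_upwards [Ioi_mem_nhds hx] with y hy
    exact (log_Gamma_add_one hy).symm
  rw [add_comm (digamma x)]
  exact hshift.unique (hsum.congr_of_eventuallyEq heq.symm)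

lemma slope_log_Gamma_add_one {x : ℝ} (hx : 0 < x) :
    slope (log ∘ Gamma) x (x + 1) = log x := by
  simp [slope_def_field, log_Gamma_add_one hx]

lemma digamma_le_log {x : ℝ} (hx : 0 < x) : digamma x ≤ log x := by
  rw [← slope_log_Gamma_add_one hx]
  exact convexOn_log_Gamma.deriv_le_slope hx (by simp; linarith) (by linarith)
    (hasDerivAt_digamma hx).differentiableAt

lemma log_sub_one_le_digamma {x : ℝ} (hx : 1 < x) : log (x - 1) ≤ digamma x := by
  have h := slope_log_Gamma_add_one (sub_pos.mpr hx)
  rw [sub_add_cancel] at h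
  rw [← h]
  exact convexOn_log_Gamma.slope_le_deriv (by simpa using hx) (by simp; linarith) (by linarith)
    (hasDerivAt_digamma (by linarith)).differentiableAt

lemma tendsto_digamma_sub_log_sub_half :
    Tendsto (fun x => digamma x - log (x - 1 / 2)) atTop (𝓝 0) := by
  have hshift : Tendsto (fun x : ℝ => x - 1 / 2) atTop atTop :=
    tendsto_atTop_add_const_right _ _ tendsto_id
  have hupper := (tendsto_log_comp_add_sub_log (1 / 2)).comp hshift
  have hlower := (tendsto_log_comp_add_sub_log (-(1 / 2))).comp hshift
  refine tendsto_of_tendsto_of_tendsto_of_le_of_le' hlower hupper ?_ ?_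
  all_goals
    filter_upwards [eventually_gt_atTop 1] with x hx
    simp only [Function.comp_apply]
  · rw [show x - 1 / 2 + -(1 / 2) = x - 1 by ring]
    linarith [log_sub_one_le_digamma hx]
  · rw [sub_add_cancel]
    linarith [digamma_le_log (by linarith : 0 < x)]

lemma two_mul_le_log_one_add_sub_log_one_sub {u : ℝ} (h0 : 0 ≤ u) (h1 : u < 1) :
    2 * u ≤ log (1 + u) - log (1 - u) := by
  have hs := hasSum_log_sub_log_of_abs_lt_one (abs_lt.mpr ⟨by linarith, h1⟩)
  simpa using le_hasSum hs 0 fun k _ => by positivity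

lemma log_one_add_sub_log_one_sub_le {u : ℝ} (h0 : 0 ≤ u) (h1 : u < 1) :
    log (1 + u) - log (1 - u) ≤ 2 * u + 2 / 3 * u ^ 3 / (1 - u ^ 2) := by
  have hs := (hasSum_nat_add_iff' 1).mpr
    (hasSum_log_sub_log_of_abs_lt_one (abs_lt.mpr ⟨by linarith, h1⟩))
  have hgeom := (hasSum_geometric_of_lt_one (sq_nonneg u) (by nlinarith)).mul_left (2 / 3 * u ^ 3)
  have hterm (k : ℕ) : 2 * (1 / (2 * ((k + 1 : ℕ) : ℝ) + 1)) * u ^ (2 * (k + 1) + 1) ≤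
      2 / 3 * u ^ 3 * (u ^ 2) ^ k := by
    have hcoef : 2 * (1 / (2 * ((k + 1 : ℕ) : ℝ) + 1)) ≤ 2 / 3 := by
      rw [mul_one_div]
      gcongr
      push_cast
      linarith [k.cast_nonneg (α := ℝ)]
    calc 2 * (1 / (2 * ((k + 1 : ℕ) : ℝ) + 1)) * u ^ (2 * (k + 1) + 1)
        = 2 * (1 / (2 * ((k + 1 : ℕ) : ℝ) + 1)) * (u ^ 3 * (u ^ 2) ^ k) := by ring
      _ ≤ 2 / 3 * (u ^ 3 * (u ^ 2) ^ k) := by gcongr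
      _ = 2 / 3 * u ^ 3 * (u ^ 2) ^ k := by ring
  have htail : log (1 + u) - log (1 - u) - 2 * u ≤ 2 / 3 * u ^ 3 * (1 - u ^ 2)⁻¹ := by
    simpa using hasSum_le hterm hs hgeom
  rw [div_eq_mul_inv]
  linarith

lemma log_one_add_sub_log_one_sub_inv_two_mul {t : ℝ} (ht : 1 / 2 < t) :
    log (1 + (2 * t)⁻¹) - log (1 - (2 * t)⁻¹) = log (t + 1 / 2) - log (t - 1 / 2) := by
  have ht0 : t ≠ 0 := by positivity
  rw [show 1 + (2 * t)⁻¹ = (t + 1 / 2) / t by field_simp,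
    show 1 - (2 * t)⁻¹ = (t - 1 / 2) / t by field_simp,
    log_div (by linarith) ht0, log_div (by linarith) ht0]
  ring

lemma inv_le_log_add_half_sub_log_sub_half {t : ℝ} (ht : 1 / 2 < t) :
    t⁻¹ ≤ log (t + 1 / 2) - log (t - 1 / 2) := by
  have h := two_mul_le_log_one_add_sub_log_one_sub (u := (2 * t)⁻¹) (by positivity)
    (inv_lt_one_of_one_lt₀ (by linarith))
  rw [log_one_add_sub_log_one_sub_inv_two_mul ht] at h
  have htwo : 2 * (2 * t)⁻¹ = t⁻¹ := by field_simp
  linarith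

lemma log_add_half_sub_log_sub_half_sub_inv_le {t : ℝ} (ht : 1 / 2 < t) :
    log (t + 1 / 2) - log (t - 1 / 2) - t⁻¹ ≤
      1 / (6 * (2 * t - 1) ^ 2) - 1 / (6 * (2 * t + 1) ^ 2) := by
  have h := log_one_add_sub_log_one_sub_le (u := (2 * t)⁻¹) (by positivity)
    (inv_lt_one_of_one_lt₀ (by linarith))
  rw [log_one_add_sub_log_one_sub_inv_two_mul ht] at h
  have ht0 : 0 < t := by linarith
  have hm : 0 < (2 * t - 1) * (2 * t + 1) := mul_pos (by linarith) (by linarith)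
  have hrem : 2 / 3 * (2 * t)⁻¹ ^ 3 / (1 - (2 * t)⁻¹ ^ 2) =
      1 / (3 * t * ((2 * t - 1) * (2 * t + 1))) := by
    rw [show 1 - (2 * t)⁻¹ ^ 2 = (2 * t - 1) * (2 * t + 1) / (2 * t) ^ 2 by field_simp; ring]
    field_simp
  have htele : 1 / (6 * (2 * t - 1) ^ 2) - 1 / (6 * (2 * t + 1) ^ 2) =
      4 * t / (3 * ((2 * t - 1) * (2 * t + 1)) ^ 2) := by
    have : 2 * t - 1 ≠ 0 := by linarith
    have : 2 * t + 1 ≠ 0 := by linarith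
    field_simp
    ring
  have hcmp : 1 / (3 * t * ((2 * t - 1) * (2 * t + 1))) ≤
      4 * t / (3 * ((2 * t - 1) * (2 * t + 1)) ^ 2) := by
    rw [div_le_div_iff₀ (by positivity) (by positivity)]
    nlinarith
  have htwo : 2 * (2 * t)⁻¹ = t⁻¹ := by field_simp
  linarith

lemma digamma_sub_log_sub_half_sub_add_one {x : ℝ} (hx : 1 / 2 < x) :
    (digamma x - log (x - 1 / 2)) - (digamma (x + 1) - log (x + 1 - 1 / 2)) =
      log (x + 1 / 2) - log (x - 1 / 2) - x⁻¹ := by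
  rw [digamma_add_one (by linarith)]
  ring_nf

lemma tendsto_digamma_add_nat_sub_log_sub_half (x : ℝ) :
    Tendsto (fun n : ℕ => digamma (x + n) - log (x + n - 1 / 2)) atTop (𝓝 0) :=
  tendsto_digamma_sub_log_sub_half.comp
    (tendsto_atTop_add_const_left _ x tendsto_natCast_atTop_atTop)

lemma digamma_sub_log_sub_half_nonneg {x : ℝ} (hx : 1 / 2 < x) :
    0 ≤ digamma x - log (x - 1 / 2) := by
  have hanti : Antitone fun n : ℕ => digamma (x + n) - log (x + n - 1 / 2) := by
    refine antitone_nat_of_succ_le fun n => ?_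
    have hxn : 1 / 2 < x + n := by linarith [n.cast_nonneg (α := ℝ)]
    have hstep := digamma_sub_log_sub_half_sub_add_one hxn
    have hlog := inv_le_log_add_half_sub_log_sub_half hxn
    push_cast
    rw [← add_assoc]
    linarith
  simpa using hanti.le_of_tendsto (tendsto_digamma_add_nat_sub_log_sub_half x) 0

lemma digamma_sub_log_sub_half_le {x : ℝ} (hx : 1 / 2 < x) :
    digamma x - log (x - 1 / 2) ≤ 1 / (6 * (2 * x - 1) ^ 2) := by
  have hmono : Monotone fun n : ℕ =>
      digamma (x + n) - log (x + n - 1 / 2) - 1 / (6 * (2 * (x + n) - 1) ^ 2) := by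
    refine monotone_nat_of_le_succ fun n => ?_
    have hxn : 1 / 2 < x + n := by linarith [n.cast_nonneg (α := ℝ)]
    have hstep := digamma_sub_log_sub_half_sub_add_one hxn
    have hlog := log_add_half_sub_log_sub_half_sub_inv_le hxn
    push_cast
    rw [← add_assoc, show 2 * (x + n + 1) - 1 = 2 * (x + n) + 1 by ring]
    linarith
  have hbound : ∀ n : ℕ, digamma x - log (x - 1 / 2) - 1 / (6 * (2 * x - 1) ^ 2) ≤
      digamma (x + n) - log (x + n - 1 / 2) := fun n => by
    have hle := hmono n.zero_le
    simp only [CharP.cast_eq_zero, add_zero] at hle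
    have hφ : 0 ≤ 1 / (6 * (2 * (x + n) - 1) ^ 2) := by positivity
    linarith
  linarith [ge_of_tendsto' (tendsto_digamma_add_nat_sub_log_sub_half x) hbound]

theorem digamma_eq_log_sub_half_bigO :
    ∃ C : ℝ, 0 < C ∧ ∀ x : ℝ, 1 < x →
      |digamma x - Real.log (x - 1 / 2)| ≤ C / x ^ 2 := by
  refine ⟨1 / 6, by norm_num, fun x hx => ?_⟩
  have hx' : 1 / 2 < x := by linarith
  rw [abs_of_nonneg (digamma_sub_log_sub_half_nonneg hx')]
  calc digamma x - log (x - 1 / 2)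
      ≤ 1 / (6 * (2 * x - 1) ^ 2) := digamma_sub_log_sub_half_le hx'
    _ ≤ 1 / 6 / x ^ 2 := by
      rw [div_div]
      gcongr
      linarith
end

section
/- Let $n \ge 2$ and let $\hat{a}_1,\dots,\hat{a}_n, \hat{b}_1,\dots,\hat{b}_n > 0$. For each fixed $j$, we have $\frac{1}{n-1}\sum_{s \ne j} \psi'(\hat{a}_j + \hat{b}_s)\left(\frac{1}{\psi'(\hat{a}_j)} + \frac{1}{\psi'(\hat{b}_s)}\right) < 1$. -/
/-!
On `(0, ∞)` the trigamma function is the series `ψ'(x) = ∑ 1 / (x + n) ^ 2`, obtained by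
differentiating the Bohr–Mollerup limit `log Γ = lim logGammaSeq` twice. Telescoping gives
`ψ'(x) < 1 / x + 1 / x ^ 2 < 2 x ∑ 1 / (x + n) ^ 3 = -x ψ''(x)`, so `x ψ'(x)` is strictly
decreasing. Hence `(x + y) ψ'(x + y)` is smaller than both `x ψ'(x)` and `y ψ'(y)`, which gives
`ψ'(x + y) / ψ'(x) + ψ'(x + y) / ψ'(y) < x / (x + y) + y / (x + y) = 1`.
-/

open Finset

/-- The trigamma function `ψ'`. -/
noncomputable def trigamma : ℝ → ℝ := deriv digamma

section

open Real Filter Topology Set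

lemma summable_one_div_add_pow (x : ℝ) {k : ℕ} (hk : 1 < k) :
    Summable fun n : ℕ => 1 / (x + n) ^ k := by
  rw [← summable_abs_iff]
  have := (summable_one_div_nat_add_rpow x k).2 (by exact_mod_cast hk)
  simpa [abs_pow, add_comm] using this

lemma hasDerivAt_one_div_add_pow (k : ℕ) (a : ℝ) {x : ℝ} (hx : x + a ≠ 0) :
    HasDerivAt (fun z => 1 / (z + a) ^ k) (-k / (x + a) ^ (k + 1)) x := by
  simp only [one_div]
  refine (((hasDerivAt_id' x).add_const a).fun_pow k).fun_inv (pow_ne_zero k hx) |>.congr_deriv ?_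
  rcases k with _ | k
  · simp
  · rw [Nat.add_sub_cancel]
    field_simp
    ring

lemma hasDerivAt_tsum_one_div_add_pow {k : ℕ} (hk : 1 < k) {x : ℝ} (hx : 0 < x) :
    HasDerivAt (fun z : ℝ => ∑' n : ℕ, 1 / (z + n) ^ k)
      (-(k : ℝ) * ∑' n : ℕ, 1 / (x + n) ^ (k + 1)) x := by
  have hmem : x ∈ Ioi (x / 2) := half_lt_self hx
  have hu : Summable fun n : ℕ => k / (x / 2 + n) ^ (k + 1) := by
    simpa only [mul_one_div] using
      (summable_one_div_add_pow (x / 2) (k := k + 1) (by omega)).mul_left (k : ℝ)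
  rw [← tsum_mul_left]
  simp_rw [mul_one_div]
  refine hasDerivAt_tsum_of_isPreconnected hu isOpen_Ioi isPreconnected_Ioi
    (fun n y (hy : x / 2 < y) => hasDerivAt_one_div_add_pow k n ?_)
    (fun n y (hy : x / 2 < y) => ?_) hmem (summable_one_div_add_pow x hk) hmem
  · have : 0 < y := by linarith
    positivity
  · have : 0 < y := by linarith
    rw [norm_div, norm_neg, Real.norm_natCast, Real.norm_eq_abs, abs_of_pos (by positivity)]
    gcongr

lemma hasSum_sub_add_one_of_antitoneOn {φ : ℝ → ℝ} {x : ℝ} (hφ : AntitoneOn φ (Ici x))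
    (hlim : Tendsto φ atTop (𝓝 0)) :
    HasSum (fun k : ℕ => φ (x + k) - φ (x + (k + 1))) (φ x) := by
  have hmem (y : ℝ) (hy : 0 ≤ y) : x + y ∈ Ici x := by simpa using hy
  rw [hasSum_iff_tendsto_nat_of_nonneg fun k =>
    sub_nonneg.2 (hφ (hmem _ k.cast_nonneg) (hmem _ (by positivity)) (by simp))]
  have htel (N : ℕ) :
      ∑ k ∈ Finset.range N, (φ (x + k) - φ (x + (k + 1))) = φ x - φ (x + N) := by
    simpa using Finset.sum_range_sub' (fun k : ℕ => φ (x + k)) N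
  simp_rw [htel]
  simpa using tendsto_const_nhds.sub
    (hlim.comp (tendsto_atTop_add_const_left _ x tendsto_natCast_atTop_atTop))

lemma mul_one_div_add_one_div_lt_one_of_strictAntiOn {f : ℝ → ℝ}
    (hf : StrictAntiOn (fun x => x * f x) (Ioi 0)) (hpos : ∀ x, 0 < x → 0 < f x) {x y : ℝ}
    (hx : 0 < x) (hy : 0 < y) :
    f (x + y) * (1 / f x + 1 / f y) < 1 := by
  have hxy : 0 < x + y := add_pos hx hy
  have hfx := hpos x hx
  have hfy := hpos y hy
  have h₁ : (x + y) * f (x + y) < x * f x := hf hx hxy (by linarith)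
  have h₂ : (x + y) * f (x + y) < y * f y := hf hy hxy (by linarith)
  calc f (x + y) * (1 / f x + 1 / f y) = f (x + y) / f x + f (x + y) / f y := by ring
    _ < x / (x + y) + y / (x + y) := add_lt_add
      ((div_lt_div_iff₀ hfx hxy).2 (by linarith)) ((div_lt_div_iff₀ hfy hxy).2 (by linarith))
    _ = 1 := by field_simp

noncomputable def digammaSeries (x : ℝ) : ℝ :=
  -eulerMascheroniConstant - 1 / x + ∑' k : ℕ, (1 / ((k : ℝ) + 1) - 1 / (x + (k + 1)))

lemma norm_one_div_succ_sub_le {z c : ℝ} (hz : 0 < z) (hzc : z ≤ c) (k : ℕ) :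
    ‖1 / ((k : ℝ) + 1) - 1 / (z + (k + 1))‖ ≤ c * (1 / (1 + k) ^ 2) := by
  have hk : (0 : ℝ) < k + 1 := by positivity
  have hterm : 1 / ((k : ℝ) + 1) - 1 / (z + (k + 1)) = z / ((k + 1) * (z + (k + 1))) := by
    field_simp
    ring
  rw [hterm, Real.norm_of_nonneg (by positivity), mul_one_div, add_comm 1 (k : ℝ)]
  have hle : (k : ℝ) + 1 ≤ z + (k + 1) := by linarith
  calc z / ((k + 1) * (z + (k + 1))) ≤ z / ((k + 1) * (k + 1)) := by gcongr
    _ ≤ c / (k + 1) ^ 2 := by rw [← sq]; gcongr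

lemma summable_one_div_succ_sub {z : ℝ} (hz : 0 < z) :
    Summable fun k : ℕ => 1 / ((k : ℝ) + 1) - 1 / (z + (k + 1)) :=
  .of_norm_bounded ((summable_one_div_add_pow 1 one_lt_two).mul_left z)
    (norm_one_div_succ_sub_le hz le_rfl)

lemma hasDerivAt_logGammaSeq (n : ℕ) {z : ℝ} (hz : 0 < z) :
    HasDerivAt (fun w => BohrMollerup.logGammaSeq w n)
      (log n - harmonic n - 1 / z + ∑ k ∈ Finset.range n, (1 / ((k : ℝ) + 1) - 1 / (z + (k + 1))))
      z := by
  have hlog (m : ℕ) : HasDerivAt (fun w => log (w + m)) (1 / (z + m)) z := by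
    simpa using ((hasDerivAt_id' z).add_const (m : ℝ)).log (by positivity)
  refine ((hasDerivAt_mul_const (log n)).add_const (log n.factorial)).sub
    (HasDerivAt.fun_sum fun m _ => hlog m) |>.congr_deriv ?_
  rw [Finset.sum_range_succ', harmonic, Finset.sum_sub_distrib]
  push_cast
  ring_nf

lemma hasDerivAt_log_Gamma {x : ℝ} (hx : 0 < x) :
    HasDerivAt (fun y => log (Gamma y)) (digammaSeries x) x := by
  have hconst :
      Tendsto (fun n : ℕ => log n - harmonic n) atTop (𝓝 (-eulerMascheroniConstant)) := by
    simpa using tendsto_harmonic_sub_log.neg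
  have hinv : TendstoUniformlyOn (fun (_ : ℕ) (z : ℝ) => -(1 / z)) (fun z => -(1 / z)) atTop
      (Ioo 0 (x + 1)) :=
    fun u hu => Eventually.of_forall fun _ _ _ => refl_mem_uniformity hu
  have hseries :=
    tendstoUniformlyOn_tsum_nat ((summable_one_div_add_pow 1 one_lt_two).mul_left (x + 1))
      fun k z (hz : z ∈ Ioo 0 (x + 1)) => norm_one_div_succ_sub_le hz.1 hz.2.le k
  refine hasDerivAt_of_tendstoUniformlyOn isOpen_Ioo
    (((hconst.tendstoUniformlyOn_const _).add hinv).add hseries |>.congr ?_ |>.congr_right ?_)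
    (.of_forall fun n z hz => hasDerivAt_logGammaSeq n hz.1)
    (fun z hz => BohrMollerup.tendsto_log_gamma hz.1) ⟨hx, by linarith⟩
  · exact .of_forall fun n z _ => by simp only [Pi.add_apply]; ring
  · exact fun z _ => by simp only [Pi.add_apply, digammaSeries]; ring

lemma hasDerivAt_digammaSeries {x : ℝ} (hx : 0 < x) :
    HasDerivAt digammaSeries (∑' n : ℕ, 1 / (x + n) ^ 2) x := by
  have hmem : x ∈ Ioi (x / 2) := half_lt_self hx
  have hterm (k : ℕ) {z : ℝ} (hz : 0 < z) :
      HasDerivAt (fun w => 1 / ((k : ℝ) + 1) - 1 / (w + (k + 1))) (1 / (z + (k + 1)) ^ 2) z := by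
    simpa [neg_div] using (hasDerivAt_one_div_add_pow 1 ((k : ℝ) + 1) (by positivity)).const_sub _
  have hseries := hasDerivAt_tsum_of_isPreconnected
    (summable_one_div_add_pow (x / 2 + 1) one_lt_two) isOpen_Ioi isPreconnected_Ioi
    (fun k z (hz : x / 2 < z) => hterm k (by linarith)) (fun k z (hz : x / 2 < z) => ?_) hmem
    (summable_one_div_succ_sub hx) hmem
  · have hinv : HasDerivAt (fun z => -eulerMascheroniConstant - 1 / z) (1 / x ^ 2) x := by
      simpa [neg_div] using (hasDerivAt_one_div_add_pow 1 0 (by simpa using hx.ne')).const_sub _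
    refine hinv.add hseries |>.congr_deriv ?_
    rw [(summable_one_div_add_pow x one_lt_two).tsum_eq_zero_add]
    push_cast
    simp only [add_zero]
  · have : 0 < z := by linarith
    rw [Real.norm_of_nonneg (by positivity), add_assoc, add_comm 1 (k : ℝ)]
    gcongr

lemma trigamma_eq_tsum {x : ℝ} (hx : 0 < x) : trigamma x = ∑' n : ℕ, 1 / (x + n) ^ 2 := by
  have hdigamma : digamma =ᶠ[𝓝 x] digammaSeries :=
    eventually_of_mem (Ioi_mem_nhds hx) fun z hz => (hasDerivAt_log_Gamma hz).deriv
  rw [trigamma, hdigamma.deriv_eq, (hasDerivAt_digammaSeries hx).deriv]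

lemma tsum_one_div_add_sq_lt {x : ℝ} (hx : 0 < x) :
    ∑' n : ℕ, 1 / (x + n) ^ 2 < 1 / x + 1 / x ^ 2 := by
  have hφ : AntitoneOn (fun u : ℝ => 1 / u + 1 / u ^ 2) (Ici x) := by
    intro u hu v _ huv
    have : 0 < u := hx.trans_le hu
    dsimp only
    gcongr
  have hlim : Tendsto (fun u : ℝ => 1 / u + 1 / u ^ 2) atTop (𝓝 0) := by
    simpa using tendsto_inv_atTop_zero.add
      (tendsto_inv_atTop_zero.comp (tendsto_pow_atTop (α := ℝ) two_ne_zero))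
  have hstep (u : ℝ) (hu : 0 < u) :
      1 / u ^ 2 < 1 / u + 1 / u ^ 2 - (1 / (u + 1) + 1 / (u + 1) ^ 2) := by
    rw [← sub_pos]
    field_simp
    ring_nf
    positivity
  have hlt (n : ℕ) := add_assoc x n 1 ▸ hstep (x + n) (by positivity)
  exact hasSum_lt (fun n => (hlt n).le) (hlt 0) (summable_one_div_add_pow x one_lt_two).hasSum
    (hasSum_sub_add_one_of_antitoneOn (x := x) hφ hlim)

lemma lt_tsum_one_div_add_cube {x : ℝ} (hx : 0 < x) :
    1 / (2 * x ^ 2) + 1 / (2 * x ^ 3) < ∑' n : ℕ, 1 / (x + n) ^ 3 := by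
  have hφ : AntitoneOn (fun u : ℝ => 1 / (2 * u ^ 2) + 1 / (2 * u ^ 3)) (Ici x) := by
    intro u hu v _ huv
    have : 0 < u := hx.trans_le hu
    dsimp only
    gcongr
  have hlim : Tendsto (fun u : ℝ => 1 / (2 * u ^ 2) + 1 / (2 * u ^ 3)) atTop (𝓝 0) := by
    have hpow (m : ℕ) (hm : m ≠ 0) : Tendsto (fun u : ℝ => 1 / (2 * u ^ m)) atTop (𝓝 0) := by
      simpa only [one_div, Function.comp_def] using tendsto_inv_atTop_zero.comp
        ((tendsto_pow_atTop (α := ℝ) hm).const_mul_atTop two_pos)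
    simpa using (hpow 2 two_ne_zero).add (hpow 3 three_ne_zero)
  have hstep (u : ℝ) (hu : 0 < u) :
      1 / (2 * u ^ 2) + 1 / (2 * u ^ 3) - (1 / (2 * (u + 1) ^ 2) + 1 / (2 * (u + 1) ^ 3))
        < 1 / u ^ 3 := by
    rw [← sub_pos]
    field_simp
    ring_nf
    positivity
  have hlt (n : ℕ) := add_assoc x n 1 ▸ hstep (x + n) (by positivity)
  exact hasSum_lt (fun n => (hlt n).le) (hlt 0)
    (hasSum_sub_add_one_of_antitoneOn (x := x) hφ hlim)
    (summable_one_div_add_pow x (by norm_num)).hasSum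

lemma tsum_one_div_add_sq_lt_two_mul_tsum_cube {x : ℝ} (hx : 0 < x) :
    ∑' n : ℕ, 1 / (x + n) ^ 2 < 2 * x * ∑' n : ℕ, 1 / (x + n) ^ 3 := calc
  _ < 1 / x + 1 / x ^ 2 := tsum_one_div_add_sq_lt hx
  _ = 2 * x * (1 / (2 * x ^ 2) + 1 / (2 * x ^ 3)) := by field_simp
  _ < _ := by gcongr; exact lt_tsum_one_div_add_cube hx

lemma strictAntiOn_mul_tsum_one_div_add_sq :
    StrictAntiOn (fun x : ℝ => x * ∑' n : ℕ, 1 / (x + n) ^ 2) (Ioi 0) := by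
  have hderiv {x : ℝ} (hx : 0 < x) := (hasDerivAt_id' x).fun_mul
    (hasDerivAt_tsum_one_div_add_pow one_lt_two hx)
  refine strictAntiOn_of_deriv_neg (convex_Ioi 0)
    (fun x hx => (hderiv hx).continuousAt.continuousWithinAt) fun x hx => ?_
  rw [interior_Ioi] at hx
  rw [(hderiv hx).deriv]
  have := tsum_one_div_add_sq_lt_two_mul_tsum_cube hx
  push_cast
  linarith

theorem trigamma_add_mul_one_div_add_one_div_lt_one {x y : ℝ} (hx : 0 < x) (hy : 0 < y) :
    trigamma (x + y) * (1 / trigamma x + 1 / trigamma y) < 1 := by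
  rw [trigamma_eq_tsum (add_pos hx hy), trigamma_eq_tsum hx, trigamma_eq_tsum hy]
  refine mul_one_div_add_one_div_lt_one_of_strictAntiOn strictAntiOn_mul_tsum_one_div_add_sq
    (fun z hz => ?_) hx hy
  exact (summable_one_div_add_pow z one_lt_two).tsum_pos (fun n => by positivity) 0
    (by simpa using pow_pos hz 2)

end

theorem jacobian_column_sum_lt_one (n : ℕ) (hn : 2 ≤ n)
    (a b : Fin n → ℝ) (ha : ∀ i, 0 < a i) (hb : ∀ i, 0 < b i) (j : Fin n) :
    (1 / (n - 1 : ℝ)) * ∑ s ∈ univ \ {j},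
      trigamma (a j + b s) * (1 / trigamma (a j) + 1 / trigamma (b s)) < 1 := by
  have hcard : #(univ \ {j}) = n - 1 := by simp [card_sdiff]
  have hne : (univ \ {j}).Nonempty := by rw [← card_pos, hcard]; omega
  have hn' : (1 : ℝ) < n := by exact_mod_cast hn
  rw [one_div_mul_eq_div, div_lt_one (by linarith)]
  calc _ < ∑ s ∈ univ \ {j}, (1 : ℝ) := sum_lt_sum_of_nonempty hne fun s _ =>
        trigamma_add_mul_one_div_add_one_div_lt_one (ha j) (hb s)
    _ = n - 1 := by rw [sum_const, hcard, nsmul_one, Nat.cast_sub (by omega), Nat.cast_one]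
end
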